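/- Let f : ℝ → ℝ be continuously differentiable with f′(t) ≠ 0 for all t ∈ ℝ, let h > 0, and let F_h(θ, ψ) = (θ − h f′(θψ)ψ, ψ + h f′(θψ)θ) be the simultaneous gradient descent update operator for the Dirac-GAN. Then the Jacobian matrix of F_h at the Nash equilibrium (0, 0) has the two complex eigenvalues 1 ± h f′(0)·i, each of absolute value √(1 + h² f′(0)²) > 1. -/

import Mathlib

/-! Write `J` for the rotation by a right angle. The update is `F_h(x) = x + φ(x) • J x` with
the continuous scalar factor `φ(θ, ψ) = h f′(θψ)`, and a continuous factor in front of a linear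
map vanishing at `0` may be frozen at its value there, so `DF_h(0) = 1 + h f′(0) J`. This is a
rotation-scaling matrix `[[a, -b], [b, a]]`, whose characteristic polynomial `(X - a)² + b²` has
the roots `a ± b i` of modulus `√(a² + b²)`. -/

open Matrix

open Asymptotics Filter Topology in
theorem hasFDerivAt_smul_apply_sub_of_continuousAt {𝕜 E F : Type*} [NontriviallyNormedField 𝕜]
    [NormedAddCommGroup E] [NormedSpace 𝕜 E] [NormedAddCommGroup F] [NormedSpace 𝕜 F]
    {φ : E → 𝕜} {x₀ : E} (hφ : ContinuousAt φ x₀) (L : E →L[𝕜] F) :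
    HasFDerivAt (fun x => φ x • L (x - x₀)) (φ x₀ • L) x₀ := by
  rw [hasFDerivAt_iff_isLittleO_nhds_zero]
  have hφ' : (fun y => φ (x₀ + y) - φ x₀) =o[𝓝 0] fun _ => (1 : 𝕜) := by
    rw [isLittleO_one_iff, ← sub_self (φ x₀)]
    exact ((hφ.comp_of_eq (continuous_const_add x₀).continuousAt (add_zero x₀)).sub
      continuousAt_const).tendsto.trans_eq (by simp)
  simpa [sub_smul] using hφ'.smul_isBigO (L.isBigO_id _)

theorem spectrum_map_ofReal_rotation_scaling (a b : ℝ) :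
    spectrum ℂ ((!![a, -b; b, a] : Matrix (Fin 2) (Fin 2) ℝ).map Complex.ofReal)
      = {a + b * Complex.I, a - b * Complex.I} := by
  ext μ
  have hfactor : μ ^ 2 - (a + a) * μ + (a * a + b * b)
      = (μ - (a + b * Complex.I)) * (μ - (a - b * Complex.I)) := by
    ring_nf
    rw [Complex.I_sq]
    ring
  rw [mem_spectrum_iff_isRoot_charpoly, charpoly_fin_two, Polynomial.IsRoot.def]
  simp [trace_fin_two, det_fin_two, hfactor, sub_eq_zero]

theorem norm_eq_sqrt_of_mem_add_sub_mul_I (a b : ℝ) :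
    ∀ z ∈ ({a + b * Complex.I, a - b * Complex.I} : Set ℂ), ‖z‖ = √(a ^ 2 + b ^ 2) := by
  rintro z (rfl | rfl)
  · exact Complex.norm_add_mul_I a b
  · simpa [sub_eq_add_neg] using Complex.norm_add_mul_I a (-b)

theorem dirac_gan_simgd_jacobian_eigenvalues
    (f : ℝ → ℝ) (hf : ContDiff ℝ 1 f) (hf' : ∀ t : ℝ, deriv f t ≠ 0)
    (h : ℝ) (hh : 0 < h)
    (F : (Fin 2 → ℝ) → (Fin 2 → ℝ))
    (hF : ∀ x : Fin 2 → ℝ,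
      F x = ![x 0 - h * deriv f (x 0 * x 1) * x 1, x 1 + h * deriv f (x 0 * x 1) * x 0]) :
    HasFDerivAt F
      (LinearMap.toContinuousLinearMap
        (Matrix.toLin'
          (!![1, -(h * deriv f 0); h * deriv f 0, 1] : Matrix (Fin 2) (Fin 2) ℝ)))
      0 ∧
    spectrum ℂ
        ((!![1, -(h * deriv f 0); h * deriv f 0, 1] : Matrix (Fin 2) (Fin 2) ℝ).map
          Complex.ofReal)
      = {1 + Complex.ofReal (h * deriv f 0) * Complex.I,
         1 - Complex.ofReal (h * deriv f 0) * Complex.I} ∧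
    (∀ lam ∈ spectrum ℂ
        ((!![1, -(h * deriv f 0); h * deriv f 0, 1] : Matrix (Fin 2) (Fin 2) ℝ).map
          Complex.ofReal),
      ‖lam‖ = Real.sqrt (1 + h ^ 2 * deriv f 0 ^ 2)) ∧
    1 < Real.sqrt (1 + h ^ 2 * deriv f 0 ^ 2) := by
  set φ : (Fin 2 → ℝ) → ℝ := fun x => h * deriv f (x 0 * x 1)
  set J := LinearMap.toContinuousLinearMap
    (Matrix.toLin' (!![0, -1; 1, 0] : Matrix (Fin 2) (Fin 2) ℝ))
  have hφ : ContinuousAt φ 0 := by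
    have := hf.continuous_deriv le_rfl
    fun_prop
  have hF_eq : F = fun x => x + φ x • J (x - 0) := by
    funext x i
    fin_cases i <;> simp [hF, φ, J, dotProduct, Fin.sum_univ_two, sub_eq_add_neg]
  have hJac : ContinuousLinearMap.id ℝ _ + φ 0 • J = LinearMap.toContinuousLinearMap
      (Matrix.toLin' (!![1, -(h * deriv f 0); h * deriv f 0, 1] : Matrix (Fin 2) (Fin 2) ℝ)) := by
    ext x i
    fin_cases i <;> simp [φ, J, dotProduct, Fin.sum_univ_two, add_comm]
  have hspec := spectrum_map_ofReal_rotation_scaling 1 (h * deriv f 0)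
  rw [Complex.ofReal_one] at hspec
  refine ⟨hF_eq ▸ hJac ▸
    (hasFDerivAt_id 0).add (hasFDerivAt_smul_apply_sub_of_continuousAt hφ J), hspec, ?_, ?_⟩
  · rw [hspec]
    simpa [mul_pow] using norm_eq_sqrt_of_mem_add_sub_mul_I 1 (h * deriv f 0)
  · rw [Real.lt_sqrt zero_le_one, one_pow, lt_add_iff_pos_right, ← mul_pow]
    exact sq_pos_of_ne_zero (mul_ne_zero hh.ne' (hf' 0))
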